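/- Let 1 < s < p and f ∈ L^p(ℝ) with ‖f‖_p = 1. For n ∈ ℤ and a dyadic interval I of length 2^n, define f_I^0 := f χ_I χ_{|f| ≤ 2^{-n/p}} and, for k ≥ 1, f_I^k := f χ_I χ_{2^{k-1} 2^{-n/p} < |f| ≤ 2^k 2^{-n/p}}. Then there exists a constant c > 0 (depending only on p, s) such that for every k ≥ 1, the triple sum over n ∈ ℤ of 2^{n s (1/p - 1/s)} times the sum over dyadic intervals I of length 2^n of ‖f_I^k‖_s^s is bounded by c · 2^{-k(p-s)}. -/

import Mathlib

/-!
On the level set `{2^{k-1} 2^{-n/p} < |f| ≤ 2^k 2^{-n/p}}` one has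
`|f|^s ≤ (2^{k-1} 2^{-n/p})^{s-p} |f|^p`, and the weight `2^{n(s/p - 1)}` cancels the dependence
on `n` exactly, leaving `2^{(k-1)(s-p)} ∫_{level set} |f|^p` for each `n` once the dyadic
intervals of length `2^n` have been summed out. For fixed `k` a point lies in the level sets of
at most `⌈p⌉` scales `n`, because the condition pins `n` to a half-open interval of length `p`;
hence the sum over `n` is at most `⌈p⌉ ∫ |f|^p = ⌈p⌉`.
-/

open MeasureTheory ENNReal

/-- The dyadic interval of length `2^n` starting at `m * 2^n`. -/
def dyadicInterval (n m : ℤ) : Set ℝ := Set.Ico ((m : ℝ) * 2 ^ (n : ℝ)) (((m : ℝ) + 1) * 2 ^ (n : ℝ))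

-- The piece `f_I^k = f χ_I χ_{2^{k-1} 2^{-n/p} < |f| ≤ 2^k 2^{-n/p}}`, for `k ≥ 1`,
-- where `I` is the dyadic interval of length `2^n` indexed by `m`.
open Classical in
noncomputable def dyadicPiece (p : ℝ) (f : ℝ → ℂ) (n m : ℤ) (k : ℕ) : ℝ → ℂ := fun t =>
  if t ∈ dyadicInterval n m ∧
      (2 : ℝ) ^ ((k : ℝ) - 1) * (2 : ℝ) ^ (-(n : ℝ) / p) < ‖f t‖ ∧
      ‖f t‖ ≤ (2 : ℝ) ^ (k : ℝ) * (2 : ℝ) ^ (-(n : ℝ) / p)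
  then f t else 0

open Set Function

lemma rpow_le_rpow_sub_mul_rpow {c y s p : ℝ} (hc : 0 < c) (hcy : c ≤ y) (hsp : s ≤ p) :
    y ^ s ≤ c ^ (s - p) * y ^ p := by
  have hy : 0 < y := hc.trans_le hcy
  calc y ^ s = y ^ (s - p) * y ^ p := by rw [← Real.rpow_add hy, sub_add_cancel]
    _ ≤ c ^ (s - p) * y ^ p :=
      mul_le_mul_of_nonneg_right (Real.rpow_le_rpow_of_nonpos hc hcy (by linarith)) (by positivity)

lemma ENNReal.tsum_le_of_encard_support_le {ι : Type*} {F : ι → ℝ≥0∞} {c : ℝ≥0∞} {N : ℕ}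
    (hF : ∀ i, F i ≤ c) (hN : (support F).encard ≤ N) : ∑' i, F i ≤ N * c :=
  calc ∑' i, F i = ∑' i : support F, F i := (tsum_subtype_support F).symm
    _ ≤ ∑' _ : support F, c := ENNReal.tsum_le_tsum fun i => hF i
    _ = (support F).encard * c := ENNReal.tsum_set_const _ c
    _ ≤ N * c := by
      gcongr
      exact_mod_cast ENat.toENNReal_le.mpr hN

lemma encard_setOf_intCast_mem_Ioc_le (a b : ℝ) :
    {n : ℤ | (n : ℝ) ∈ Ioc a b}.encard ≤ ⌈b - a⌉₊ := by
  have hset : {n : ℤ | (n : ℝ) ∈ Ioc a b} = ↑(Finset.Ioc ⌊a⌋ ⌊b⌋) := by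
    ext n
    simp [Int.floor_lt, Int.le_floor]
  have hcount : ⌊b⌋ - ⌊a⌋ ≤ ⌈b - a⌉ := by
    rw [Int.le_ceil_iff]
    push_cast
    linarith [Int.floor_le b, Int.lt_floor_add_one a]
  rw [hset, encard_coe_eq_coe_finsetCard, Int.card_Ioc, ← Int.ceil_toNat]
  exact_mod_cast Int.toNat_le_toNat hcount

section Lp

variable {α F : Type*} [NormedAddCommGroup F]

lemma eLpNorm_ofReal_rpow_eq_lintegral [MeasurableSpace α] {μ : Measure α} {s : ℝ} (hs : 0 < s)
    (f : α → F) :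
    eLpNorm f (ENNReal.ofReal s) μ ^ s = ∫⁻ x, ‖f x‖ₑ ^ s ∂μ := by
  have h := eLpNorm_nnreal_pow_eq_lintegral (f := f) (μ := μ) (Real.toNNReal_pos.mpr hs).ne'
  rwa [Real.coe_toNNReal _ hs.le] at h

lemma tsum_eLpNorm_indicator_rpow [MeasurableSpace α] {μ : Measure α} {ι : Type*} [Countable ι]
    {E : ι → Set α} (hE : ∀ i, MeasurableSet (E i)) (hdisj : Pairwise (Disjoint on E))
    (hcover : ⋃ i, E i = univ) {s : ℝ} (hs : 0 < s) (f : α → F) :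
    ∑' i, eLpNorm ((E i).indicator f) (ENNReal.ofReal s) μ ^ s = ∫⁻ x, ‖f x‖ₑ ^ s ∂μ := by
  have hterm (i : ι) :
      eLpNorm ((E i).indicator f) (ENNReal.ofReal s) μ ^ s = ∫⁻ x in E i, ‖f x‖ₑ ^ s ∂μ := by
    rw [eLpNorm_indicator_eq_eLpNorm_restrict (hE i), eLpNorm_ofReal_rpow_eq_lintegral hs]
  rw [tsum_congr hterm, ← lintegral_iUnion hE hdisj, hcover, Measure.restrict_univ]

lemma enorm_indicator_rpow_le {A : Set α} {f : α → F} {c s p : ℝ} (hc : 0 < c)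
    (hA : ∀ x ∈ A, c ≤ ‖f x‖) (hs : 0 < s) (hsp : s ≤ p) (x : α) :
    ‖A.indicator f x‖ₑ ^ s ≤ ENNReal.ofReal (c ^ (s - p)) * ‖A.indicator f x‖ₑ ^ p := by
  by_cases hx : x ∈ A
  · rw [indicator_of_mem hx, ← ofReal_norm,
      ofReal_rpow_of_nonneg (norm_nonneg _) hs.le,
      ofReal_rpow_of_nonneg (norm_nonneg _) (hs.trans_le hsp).le, ← ofReal_mul (by positivity)]
    exact ofReal_le_ofReal (rpow_le_rpow_sub_mul_rpow hc (hA x hx) hsp)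
  · simp [indicator_of_notMem hx, ENNReal.zero_rpow_of_pos hs]

end Lp

lemma dyadicInterval_eq_Ico_zsmul (n : ℤ) :
    dyadicInterval n = fun m : ℤ => Ico (m • (2 : ℝ) ^ (n : ℝ)) ((m + 1) • (2 : ℝ) ^ (n : ℝ)) := by
  funext m
  simp [dyadicInterval, zsmul_eq_mul]

lemma iUnion_dyadicInterval (n : ℤ) : ⋃ m, dyadicInterval n m = univ := by
  rw [dyadicInterval_eq_Ico_zsmul]
  exact iUnion_Ico_zsmul (by positivity)

lemma pairwise_disjoint_dyadicInterval (n : ℤ) : Pairwise (Disjoint on dyadicInterval n) := by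
  rw [dyadicInterval_eq_Ico_zsmul]
  exact pairwise_disjoint_Ico_zsmul _

def dyadicLevelSet {α E : Type*} [Norm E] (p : ℝ) (f : α → E) (n : ℤ) (k : ℕ) : Set α :=
  (fun t => ‖f t‖) ⁻¹' Ioc ((2 : ℝ) ^ ((k : ℝ) - 1) * (2 : ℝ) ^ (-(n : ℝ) / p))
    ((2 : ℝ) ^ (k : ℝ) * (2 : ℝ) ^ (-(n : ℝ) / p))

lemma dyadicPiece_eq_indicator (p : ℝ) (f : ℝ → ℂ) (n m : ℤ) (k : ℕ) :
    dyadicPiece p f n m k = (dyadicInterval n m ∩ dyadicLevelSet p f n k).indicator f := by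
  classical
  funext t
  rw [indicator_apply]
  exact if_congr Iff.rfl rfl rfl

section LevelSet

variable {α E : Type*} [NormedAddCommGroup E] {p : ℝ} {f : α → E} {n : ℤ} {k : ℕ} {t : α}

lemma mem_dyadicLevelSet :
    t ∈ dyadicLevelSet p f n k ↔
      (2 : ℝ) ^ ((k : ℝ) - 1 - n / p) < ‖f t‖ ∧ ‖f t‖ ≤ (2 : ℝ) ^ ((k : ℝ) - n / p) := by
  simp only [dyadicLevelSet, mem_preimage, mem_Ioc, ← Real.rpow_add two_pos, neg_div,
    ← sub_eq_add_neg]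

lemma nullMeasurableSet_dyadicLevelSet [MeasurableSpace α] {μ : Measure α}
    (hf : AEStronglyMeasurable f μ) : NullMeasurableSet (dyadicLevelSet p f n k) μ :=
  hf.norm.aemeasurable.nullMeasurable measurableSet_Ioc

lemma encard_setOf_mem_dyadicLevelSet_le (hp : 0 < p) (f : α → E) (k : ℕ) (t : α) :
    {n : ℤ | t ∈ dyadicLevelSet p f n k}.encard ≤ ⌈p⌉₊ := by
  set a := p * (k - Real.logb 2 ‖f t‖)
  have hsub : {n : ℤ | t ∈ dyadicLevelSet p f n k} ⊆ {n : ℤ | (n : ℝ) ∈ Ioc (a - p) a} := by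
    intro n (hn : t ∈ dyadicLevelSet p f n k)
    obtain ⟨hlo, hhi⟩ := mem_dyadicLevelSet.mp hn
    have hpos : 0 < ‖f t‖ := (Real.rpow_pos_of_pos two_pos _).trans hlo
    have hlog_lo := (Real.lt_logb_iff_rpow_lt one_lt_two hpos).mpr hlo
    have hlog_hi := (Real.logb_le_iff_le_rpow one_lt_two hpos).mpr hhi
    have h1 : (k - 1 - Real.logb 2 ‖f t‖) * p < n := (lt_div_iff₀ hp).mp (by linarith)
    have h2 : (n : ℝ) ≤ (k - Real.logb 2 ‖f t‖) * p := (div_le_iff₀ hp).mp (by linarith)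
    constructor <;> linarith
  calc _ ≤ {n : ℤ | (n : ℝ) ∈ Ioc (a - p) a}.encard := encard_le_encard hsub
    _ ≤ ⌈a - (a - p)⌉₊ := encard_setOf_intCast_mem_Ioc_le _ _
    _ = ⌈p⌉₊ := by simp

lemma tsum_enorm_indicator_dyadicLevelSet_rpow_le (hp : 0 < p) (f : α → E) (k : ℕ) (t : α) :
    ∑' n : ℤ, ‖(dyadicLevelSet p f n k).indicator f t‖ₑ ^ p ≤ ⌈p⌉₊ * ‖f t‖ₑ ^ p := by
  refine ENNReal.tsum_le_of_encard_support_le (fun n => ?_) ?_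
  · gcongr
    exact enorm_indicator_le_enorm_self _ _
  · refine (encard_le_encard fun n hn => ?_).trans (encard_setOf_mem_dyadicLevelSet_le hp f k t)
    by_contra hnot
    exact hn (by simp [indicator_of_notMem (show t ∉ dyadicLevelSet p f n k from hnot),
      ENNReal.zero_rpow_of_pos hp])

lemma ofReal_mul_lintegral_dyadicLevelSet_le [MeasurableSpace α] (μ : Measure α) {s : ℝ}
    (hs : 0 < s) (hsp : s < p) (f : α → E) (n : ℤ) (k : ℕ) :
    ENNReal.ofReal ((2 : ℝ) ^ ((n : ℝ) * s * (1 / p - 1 / s))) *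
        ∫⁻ t, ‖(dyadicLevelSet p f n k).indicator f t‖ₑ ^ s ∂μ
      ≤ ENNReal.ofReal ((2 : ℝ) ^ (((k : ℝ) - 1) * (s - p))) *
        ∫⁻ t, ‖(dyadicLevelSet p f n k).indicator f t‖ₑ ^ p ∂μ := by
  have hbound := enorm_indicator_rpow_le (A := dyadicLevelSet p f n k)
    (Real.rpow_pos_of_pos two_pos ((k : ℝ) - 1 - n / p))
    (fun t ht => (mem_dyadicLevelSet.mp ht).1.le) hs hsp.le
  calc _ ≤ ENNReal.ofReal ((2 : ℝ) ^ ((n : ℝ) * s * (1 / p - 1 / s))) *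
        (ENNReal.ofReal (((2 : ℝ) ^ ((k : ℝ) - 1 - n / p)) ^ (s - p)) *
          ∫⁻ t, ‖(dyadicLevelSet p f n k).indicator f t‖ₑ ^ p ∂μ) := by
        refine mul_le_mul_right ?_ _
        rw [← lintegral_const_mul' _ _ ofReal_ne_top]
        exact lintegral_mono hbound
    _ = _ := by
        have hp0 : p ≠ 0 := (hs.trans hsp).ne'
        rw [← mul_assoc, ← ofReal_mul (by positivity), ← Real.rpow_mul zero_le_two,
          ← Real.rpow_add two_pos]
        congr 3
        field_simp
        ring

lemma tsum_lintegral_dyadicLevelSet_le [MeasurableSpace α] {μ : Measure α}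
    (hf : AEStronglyMeasurable f μ) (hp : 0 < p) (k : ℕ) :
    ∑' n : ℤ, ∫⁻ t, ‖(dyadicLevelSet p f n k).indicator f t‖ₑ ^ p ∂μ
      ≤ ⌈p⌉₊ * ∫⁻ t, ‖f t‖ₑ ^ p ∂μ := by
  rw [← lintegral_tsum fun n =>
    (hf.indicator₀ (nullMeasurableSet_dyadicLevelSet hf)).enorm.pow_const p,
    ← lintegral_const_mul' _ _ (natCast_ne_top _)]
  exact lintegral_mono (tsum_enorm_indicator_dyadicLevelSet_rpow_le hp f k)

end LevelSet

lemma tsum_eLpNorm_dyadicPiece_rpow {s : ℝ} (hs : 0 < s) (p : ℝ) (f : ℝ → ℂ) (n : ℤ) (k : ℕ) :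
    ∑' m : ℤ, eLpNorm (dyadicPiece p f n m k) (ENNReal.ofReal s) volume ^ s
      = ∫⁻ t, ‖(dyadicLevelSet p f n k).indicator f t‖ₑ ^ s := by
  simp_rw [dyadicPiece_eq_indicator, ← indicator_indicator]
  exact tsum_eLpNorm_indicator_rpow (fun m => measurableSet_Ico)
    (pairwise_disjoint_dyadicInterval n) (iUnion_dyadicInterval n) hs _

theorem stmt_4 (p s : ℝ) (hs : 1 < s) (hsp : s < p) (f : ℝ → ℂ)
    (hf : MemLp f (ENNReal.ofReal p) volume)
    (hf1 : eLpNorm f (ENNReal.ofReal p) volume = 1) :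
    ∃ c : ℝ, 0 < c ∧ ∀ k : ℕ, 1 ≤ k →
      ∑' n : ℤ, ENNReal.ofReal ((2 : ℝ) ^ ((n : ℝ) * s * (1 / p - 1 / s))) *
          ∑' m : ℤ, (eLpNorm (dyadicPiece p f n m k) (ENNReal.ofReal s) volume) ^ s
        ≤ ENNReal.ofReal (c * (2 : ℝ) ^ (-(k : ℝ) * (p - s))) := by
  have hs0 : 0 < s := by linarith
  have hp0 : 0 < p := by linarith
  have hf_int : ∫⁻ t, ‖f t‖ₑ ^ p = 1 := by
    rw [← eLpNorm_ofReal_rpow_eq_lintegral hp0, hf1, one_rpow]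
  refine ⟨⌈p⌉₊ * 2 ^ (p - s), by positivity, fun k _ => ?_⟩
  calc _ = ∑' n : ℤ, ENNReal.ofReal ((2 : ℝ) ^ ((n : ℝ) * s * (1 / p - 1 / s))) *
          ∫⁻ t, ‖(dyadicLevelSet p f n k).indicator f t‖ₑ ^ s := by
        simp_rw [tsum_eLpNorm_dyadicPiece_rpow hs0]
    _ ≤ ∑' n : ℤ, ENNReal.ofReal ((2 : ℝ) ^ (((k : ℝ) - 1) * (s - p))) *
          ∫⁻ t, ‖(dyadicLevelSet p f n k).indicator f t‖ₑ ^ p :=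
        ENNReal.tsum_le_tsum fun n => ofReal_mul_lintegral_dyadicLevelSet_le _ hs0 hsp f n k
    _ ≤ ENNReal.ofReal ((2 : ℝ) ^ (((k : ℝ) - 1) * (s - p))) * (⌈p⌉₊ * ∫⁻ t, ‖f t‖ₑ ^ p) := by
        rw [ENNReal.tsum_mul_left]
        exact mul_le_mul_right (tsum_lintegral_dyadicLevelSet_le hf.1 hp0 k) _
    _ = _ := by
        rw [hf_int, mul_one, ← ofReal_natCast, ← ofReal_mul (by positivity), mul_assoc,
          ← Real.rpow_add two_pos, mul_comm]
        ring_nf
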